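/- arXiv:0712.0331 — 2 statements merged into one kernel-verified Lean document; each statement's English description precedes it below -/
import Mathlib

section
/- Let r ≥ 1 and let n_1, ..., n_r be integers with 1 < n_1 | n_2 | ... | n_r = n, let G = C_{n_1} ⊕ ... ⊕ C_{n_r} and Q = C_{n/n_1} ⊕ ... ⊕ C_{n/n_r}, and set T = Σ_{d | n} (min(η(C_{P^-(d)}^r), D(C_d^r)) − 1)/d, the sum over all positive divisors d of n, where C_m^r denotes the direct sum of r copies of C_m. Then k(G) ≤ T − k*(Q)/n; moreover, if gcd(n_i, n/n_i) = 1 for every i (so that G is a direct summand of C_n^r), then k(G) ≤ T − k*(Q). -/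
open scoped BigOperators

attribute [local instance] Classical.propDecidable

/-- A sequence (multiset) over `G` is zero-sumfree if no nonempty sub-multiset sums to `0`. -/
def IsZeroSumFree {G : Type*} [AddCommGroup G] (S : Multiset G) : Prop :=
  ∀ T : Multiset G, T ≤ S → T ≠ 0 → T.sum ≠ 0

/-- A minimal zero-sum sequence: sum `0`, and no nonempty proper sub-multiset sums to `0`. -/
def IsMinimalZeroSum {G : Type*} [AddCommGroup G] (S : Multiset G) : Prop :=
  S.sum = 0 ∧ ∀ T : Multiset G, T < S → T ≠ 0 → T.sum ≠ 0

/-- The cross number of a sequence: `k(S) = Σ_{g ∈ S} 1/ord(g)`. -/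
noncomputable def crossNumber {G : Type*} [AddCommGroup G] (S : Multiset G) : ℝ :=
  (S.map fun g => (1 : ℝ) / (addOrderOf g)).sum

/-- The little cross number `k(G)`: max of `k(S)` over zero-sumfree sequences `S` over `G`. -/
noncomputable def littleCrossNumber (G : Type*) [AddCommGroup G] : ℝ :=
  sSup {x : ℝ | ∃ S : Multiset G, IsZeroSumFree S ∧ crossNumber S = x}

/-- The cross number `K(G)`: max of `k(S)` over minimal zero-sum sequences `S` over `G`. -/
noncomputable def bigCrossNumber (G : Type*) [AddCommGroup G] : ℝ :=
  sSup {x : ℝ | ∃ S : Multiset G, IsMinimalZeroSum S ∧ crossNumber S = x}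

/-- The Davenport constant `D(G)`. -/
noncomputable def davenport (G : Type*) [AddCommGroup G] : ℕ :=
  sInf {t | 1 ≤ t ∧ ∀ S : Multiset G, t ≤ Multiset.card S →
    ∃ T, T ≤ S ∧ T ≠ 0 ∧ T.sum = 0}

/-- The constant `η(G)`. -/
noncomputable def etaConst (G : Type*) [AddCommGroup G] : ℕ :=
  sInf {t | 1 ≤ t ∧ ∀ S : Multiset G, t ≤ Multiset.card S →
    ∃ T, T ≤ S ∧ T ≠ 0 ∧ Multiset.card T ≤ AddMonoid.exponent G ∧ T.sum = 0}

/-- `υ_i(d',d) = A_i / gcd(A_i, B_i)` where `A_i = gcd(d', n_i)` and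
`B_i = lcm(d, n_i)/lcm(d', n_i)`. -/
def upsilon (ni d' d : ℕ) : ℕ :=
  Nat.gcd d' ni / Nat.gcd (Nat.gcd d' ni) (Nat.lcm d ni / Nat.lcm d' ni)

/-- `k*` of `C_{n_1} ⊕ ... ⊕ C_{n_r}`, computed from the primary decomposition. -/
noncomputable def kStarTuple {r : ℕ} (n : Fin r → ℕ) : ℝ :=
  ∑ i, ∑ p ∈ (n i).primeFactors,
    ((p ^ ((n i).factorization p) : ℝ) - 1) / (p ^ ((n i).factorization p))

/-- `α(n) = Σ_{d | n} (P⁻(d) − 1)/d`. -/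
noncomputable def alphaFn (n : ℕ) : ℝ :=
  ∑ d ∈ n.divisors, ((d.minFac : ℝ) - 1) / d

/-- `β(n) = Σ_{p | n prime} (p − 1)/p`. -/
noncomputable def betaFn (n : ℕ) : ℝ :=
  ∑ p ∈ n.primeFactors, ((p : ℝ) - 1) / p

/-!
Embed `G` into `C_n^r` by `x ↦ ((n / nᵢ) xᵢ)ᵢ`. For `q ∣ n / nᵢ` the map `x ↦ xᵢ mod q` kills the
image of `G`, so a zero-sumfree sequence over `G` stays zero-sumfree after adjoining `q - 1` copies
of an element that this map sends to a unit while the other chosen maps send it to `0`. Adjoining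
`n / nᵢ - 1` copies of `eᵢ` adds `Σ (n / nᵢ - 1) / n ≥ k*(Q) / n` to the cross number; when
`gcd(nᵢ, n / nᵢ) = 1`, adjoining `p^a - 1` copies of `(n / p^a) eᵢ` for each `p^a ∥ n / nᵢ` adds
exactly `k*(Q)`.

It remains to bound `k(S)` for zero-sumfree `S` over `C_n^r`, by induction on `|S|`. If for every
`d ∣ n` fewer than `min(η(C_p^r), D(C_d^r))` elements of `S` have order `d` (`p = P⁻(d)`), the bound
is immediate. Otherwise the elements of order `d` lie in a copy of `C_d^r` and have no zero sum, so
there are at least `η(C_p^r)` of them and at most `p` of them sum to some `σ` with `(d / p) σ = 0`;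
replacing these by `σ` shortens `S` without lowering its cross number.
-/

open Multiset

namespace Multiset

variable {α β : Type*}

theorem exists_le_map_eq_of_le_map {f : α → β} {s : Multiset α} {u : Multiset β}
    (h : u ≤ s.map f) : ∃ t ≤ s, t.map f = u := by
  induction s using Multiset.induction_on generalizing u with
  | empty => exact ⟨0, le_rfl, by simpa using (h.antisymm (zero_le u)).symm⟩
  | cons a s ih =>
    rw [map_cons] at h
    by_cases ha : f a ∈ u
    · obtain ⟨t, hts, htu⟩ := ih (erase_le_iff_le_cons.2 h)
      exact ⟨a ::ₘ t, cons_le_cons a hts, by rw [map_cons, htu, cons_erase ha]⟩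
    · obtain ⟨t, hts, htu⟩ := ih ((le_cons_of_notMem ha).1 h)
      exact ⟨t, hts.trans (le_cons_self s a), htu⟩

theorem exists_eq_add_of_le_add [DecidableEq α] {u s t : Multiset α} (h : u ≤ s + t) :
    ∃ u₁ ≤ s, ∃ u₂ ≤ t, u = u₁ + u₂ := by
  refine ⟨u ∩ s, inter_le_right, u - u ∩ s, ?_, (add_tsub_cancel_of_le inter_le_left).symm⟩
  rw [le_iff_count]
  intro a
  have := (le_iff_count.1 h) a
  rw [count_add] at this
  rw [count_sub, count_inter]
  omega

end Multiset

section CrossNumber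

variable {A : Type*} [AddCommGroup A]

@[simp]
lemma crossNumber_zero : crossNumber (0 : Multiset A) = 0 := by
  simp [crossNumber]

@[simp]
lemma crossNumber_add (S T : Multiset A) :
    crossNumber (S + T) = crossNumber S + crossNumber T := by
  simp [crossNumber]

@[simp]
lemma crossNumber_singleton (x : A) : crossNumber {x} = 1 / addOrderOf x := by
  simp [crossNumber]

@[simp]
lemma crossNumber_replicate (k : ℕ) (x : A) :
    crossNumber (replicate k x) = k / addOrderOf x := by
  simp [crossNumber, div_eq_mul_one_div (k : ℝ)]

lemma crossNumber_sum {ι : Type*} (s : Finset ι) (S : ι → Multiset A) :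
    crossNumber (∑ i ∈ s, S i) = ∑ i ∈ s, crossNumber (S i) := by
  classical
  induction s using Finset.induction_on with
  | empty => simp
  | insert i s hi ih => rw [Finset.sum_insert hi, Finset.sum_insert hi, crossNumber_add, ih]

lemma crossNumber_map_of_injective {B : Type*} [AddCommGroup B] {e : A →+ B}
    (he : Function.Injective e) (S : Multiset A) : crossNumber (S.map e) = crossNumber S := by
  simp [crossNumber, addOrderOf_injective e he]

lemma crossNumber_of_forall_addOrderOf_eq {S : Multiset A} {d : ℕ}
    (h : ∀ x ∈ S, addOrderOf x = d) : crossNumber S = card S / d := by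
  rw [crossNumber, map_congr rfl fun x hx => by rw [h x hx], map_const', sum_replicate,
    nsmul_eq_mul, mul_one_div]

lemma crossNumber_le_of_card_filter_le (S : Multiset A) (D : Finset ℕ)
    (hS : ∀ x ∈ S, addOrderOf x ∈ D) (c : ℕ → ℝ)
    (hc : ∀ d ∈ D, (card (S.filter fun x => addOrderOf x = d) : ℝ) ≤ c d) :
    crossNumber S ≤ ∑ d ∈ D, c d / d := by
  classical
  have hsub : (S.map addOrderOf).toFinset ⊆ D := fun d hd => by
    obtain ⟨x, hx, rfl⟩ := mem_map.1 (mem_toFinset.1 hd)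
    exact hS x hx
  have hmap : crossNumber S = ((S.map addOrderOf).map fun d : ℕ => 1 / (d : ℝ)).sum := by
    rw [crossNumber, map_map, Function.comp_def]
  rw [hmap, Finset.sum_multiset_map_count,
    Finset.sum_subset hsub fun d _ hd => by rw [count_eq_zero.2 (by simpa using hd), zero_smul]]
  refine Finset.sum_le_sum fun d hd => ?_
  rw [count_map, nsmul_eq_mul, mul_one_div]
  simp_rw [eq_comm (a := d)]
  gcongr
  exact hc d hd

end CrossNumber

section Constants

variable {A : Type*} [AddCommGroup A] [Finite A]

lemma one_le_exponent_mul_card : 1 ≤ AddMonoid.exponent A * Nat.card A :=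
  Nat.one_le_iff_ne_zero.2 (mul_ne_zero AddMonoid.exponent_ne_zero_of_finite Nat.card_pos.ne')

lemma exists_short_zeroSum_of_card_ge (S : Multiset A)
    (h : AddMonoid.exponent A * Nat.card A ≤ card S) :
    ∃ T ≤ S, T ≠ 0 ∧ card T ≤ AddMonoid.exponent A ∧ T.sum = 0 := by
  classical
  have := Fintype.ofFinite A
  obtain ⟨x, -, hx⟩ := Finset.exists_le_of_sum_le (f := fun _ => AddMonoid.exponent A)
    (g := fun x => count x S) Finset.univ_nonempty
    (by simpa [sum_count_eq_card, mul_comm] using h)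
  exact ⟨_, le_count_iff_replicate_le.1 hx, fun h0 =>
    AddMonoid.exponent_ne_zero_of_finite (by simpa using congrArg card h0),
    by simp, by simp [AddMonoid.exponent_nsmul_eq_zero]⟩

lemma exists_short_zeroSum_of_etaConst_le {S : Multiset A} (h : etaConst A ≤ card S) :
    ∃ T ≤ S, T ≠ 0 ∧ card T ≤ AddMonoid.exponent A ∧ T.sum = 0 := by
  obtain ⟨-, hη⟩ : etaConst A ∈ _ :=
    Nat.sInf_mem ⟨_, one_le_exponent_mul_card, exists_short_zeroSum_of_card_ge⟩
  exact hη S h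

lemma exists_zeroSum_of_davenport_le {S : Multiset A} (h : davenport A ≤ card S) :
    ∃ T ≤ S, T ≠ 0 ∧ T.sum = 0 := by
  obtain ⟨-, hD⟩ : davenport A ∈ _ :=
    Nat.sInf_mem ⟨_, one_le_exponent_mul_card, fun S hS =>
      (exists_short_zeroSum_of_card_ge S hS).imp fun _ ⟨hTS, hT0, _, hT⟩ => ⟨hTS, hT0, hT⟩⟩
  exact hD S h

end Constants

lemma exists_le_card_le_exponent_map_sum_eq_zero {A H : Type*} [AddCommGroup A]
    [AddCommGroup H] [Finite H] (f : A →+ H) {Y : Multiset A} (h : etaConst H ≤ card Y) :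
    ∃ T ≤ Y, T ≠ 0 ∧ card T ≤ AddMonoid.exponent H ∧ f T.sum = 0 := by
  obtain ⟨U, hUY, hU0, hUcard, hU⟩ :=
    exists_short_zeroSum_of_etaConst_le (S := Y.map f) (by rwa [card_map])
  obtain ⟨T, hTY, rfl⟩ := exists_le_map_eq_of_le_map hUY
  exact ⟨T, hTY, by simpa using hU0, by simpa using hUcard, by rwa [map_multiset_sum]⟩

namespace IsZeroSumFree

variable {A B : Type*} [AddCommGroup A] [AddCommGroup B] {S T : Multiset A}

lemma zero : IsZeroSumFree (0 : Multiset A) :=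
  fun _ hT hT0 _ => hT0 (le_zero.1 hT)

lemma mono (hS : IsZeroSumFree S) (hT : T ≤ S) : IsZeroSumFree T :=
  fun U hU => hS U (hU.trans hT)

lemma map (hS : IsZeroSumFree S) {f : A →+ B} (hf : Function.Injective f) :
    IsZeroSumFree (S.map f) := by
  intro U hU hU0 hUsum
  obtain ⟨T, hTS, rfl⟩ := exists_le_map_eq_of_le_map hU
  exact hS T hTS (by simpa using hU0) (hf (by rwa [f.map_zero, map_multiset_sum]))

lemma of_map {f : A →+ B} (h : IsZeroSumFree (S.map f)) : IsZeroSumFree S :=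
  fun T hTS hT0 hT => h _ (map_le_map hTS) (by simpa using hT0) (by rw [← map_multiset_sum, hT,
    f.map_zero])

lemma card_lt_davenport [Finite A] (hS : IsZeroSumFree S) : card S < davenport A := by
  by_contra! h
  obtain ⟨T, hTS, hT0, hT⟩ := exists_zeroSum_of_davenport_le h
  exact hS T hTS hT0 hT

lemma sub_add_singleton_sum [DecidableEq A] (hS : IsZeroSumFree S) (hTS : T ≤ S) (hT0 : T ≠ 0) :
    IsZeroSumFree (S - T + {T.sum}) := by
  intro U hU hU0 hUsum
  rw [add_comm, singleton_add] at hU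
  by_cases hσ : T.sum ∈ U
  · -- `U` uses the new element `T.sum`: trade it back for `T`.
    have hU' : U.erase T.sum + T ≤ S :=
      (add_le_add_left (erase_le_iff_le_cons.2 hU) T).trans_eq (tsub_add_cancel_of_le hTS)
    refine hS _ hU' (by simp [hT0]) ?_
    rw [sum_add, add_comm, sum_erase hσ, hUsum]
  · exact hS U (((le_cons_of_notMem hσ).1 hU).trans tsub_le_self) hU0 hUsum

lemma exists_card_lt_crossNumber_le (hS : IsZeroSumFree S) (hTS : T ≤ S) (hT0 : T ≠ 0) {d : ℕ}
    (hd : 0 < d) (hTd : ∀ x ∈ T, addOrderOf x = d) (hcard : card T ≤ d.minFac)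
    (hσ : (d / d.minFac) • T.sum = 0) :
    ∃ S' : Multiset A, IsZeroSumFree S' ∧ card S' < card S ∧ crossNumber S ≤ crossNumber S' := by
  classical
  obtain ⟨x, hx⟩ := exists_mem_of_ne_zero hT0
  have hd1 : d ≠ 1 := fun h => hS {x} (singleton_le.2 (mem_of_le hTS hx)) (singleton_ne_zero x)
    (by simpa [← AddMonoid.addOrderOf_eq_one_iff, h] using hTd x hx)
  have hp := Nat.minFac_prime hd1
  have hdp : 0 < d / d.minFac := Nat.div_pos (Nat.minFac_le hd) hp.pos
  have hord : addOrderOf T.sum ∣ d / d.minFac := addOrderOf_dvd_of_nsmul_eq_zero hσ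
  have hpord : d.minFac * addOrderOf T.sum ≤ d :=
    (Nat.mul_le_mul_left _ (Nat.le_of_dvd hdp hord)).trans (Nat.mul_div_le d _)
  have hT2 : 2 ≤ card T := by
    by_contra! h
    obtain ⟨y, rfl⟩ := card_eq_one.1 (show card T = 1 by have := card_pos.2 hT0; omega)
    have := hTd y (mem_singleton_self y)
    simp only [sum_singleton, this] at hpord
    nlinarith [hp.two_le]
  refine ⟨S - T + {T.sum}, hS.sub_add_singleton_sum hTS hT0, ?_, ?_⟩
  · have := card_le_card hTS
    simp only [card_add, card_sub hTS, card_singleton]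
    omega
  -- `|T| / d ≤ p / d ≤ 1 / ord(σ)` as `ord(σ)` divides `d / p`
  calc crossNumber S = crossNumber (S - T) + card T / d := by
        rw [← crossNumber_of_forall_addOrderOf_eq hTd, ← crossNumber_add, tsub_add_cancel_of_le hTS]
    _ ≤ crossNumber (S - T) + 1 / addOrderOf T.sum := by
        gcongr _ + ?_
        rw [div_le_div_iff₀ (by exact_mod_cast hd)
          (by exact_mod_cast Nat.pos_of_dvd_of_pos hord hdp)]
        exact_mod_cast (by nlinarith : card T * addOrderOf T.sum ≤ 1 * d)
    _ = crossNumber (S - T + {T.sum}) := by simp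

lemma add_sum_replicate {ι : Type*} (hS : IsZeroSumFree S) (s : Finset ι) {m : ι → ℕ}
    (w : ι → A) (φ : ∀ t, A →+ ZMod (m t)) (hφS : ∀ t ∈ s, ∀ x ∈ S, φ t x = 0)
    (hφw : ∀ t ∈ s, ∀ t' ∈ s, t' ≠ t → φ t (w t') = 0) (hunit : ∀ t ∈ s, IsUnit (φ t (w t))) :
    IsZeroSumFree (S + ∑ t ∈ s, replicate (m t - 1) (w t)) := by
  classical
  set V : Multiset ι := ∑ t ∈ s, replicate (m t - 1) t
  have hcountV : ∀ t, count t V = if t ∈ s then m t - 1 else 0 := by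
    simp [V, count_sum', count_replicate]
  have hmemV : ∀ t ∈ V, t ∈ s := fun t ht => by
    by_contra h
    simp [← count_pos, hcountV, h] at ht
  have hW : ∑ t ∈ s, replicate (m t - 1) (w t) = V.map w := by
    rw [show V.map w = mapAddMonoidHom w V from rfl, map_sum]
    simp
  intro U hU hU0 hUsum
  rw [hW] at hU
  obtain ⟨U₁, hU₁, U₂, hU₂, rfl⟩ := exists_eq_add_of_le_add hU
  obtain ⟨V', hV', rfl⟩ := exists_le_map_eq_of_le_map hU₂
  -- `φ t` sees only the copies of `w t`, fewer than `m t` of them, and `φ t (w t)` is a unit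
  have hV'0 : V' = 0 := by
    refine eq_zero_of_forall_notMem fun t ht => ?_
    have hts := hmemV t (mem_of_le hV' ht)
    have hsum : φ t (V'.map w).sum = count t V' • φ t (w t) := by
      rw [map_multiset_sum, map_map]
      exact sum_map_eq_nsmul_single t fun t' ht' ht'V =>
        hφw t hts t' (hmemV t' (mem_of_le hV' ht'V)) ht'
    have hU₁0 : φ t U₁.sum = 0 := by
      rw [map_multiset_sum]
      refine sum_eq_zero fun y hy => ?_
      obtain ⟨x, hx, rfl⟩ := mem_map.1 hy
      exact hφS t hts x (mem_of_le hU₁ hx)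
    have hzero := congrArg (φ t) hUsum
    rw [sum_add, (φ t).map_add, hU₁0, zero_add, hsum, (φ t).map_zero, nsmul_eq_mul,
      (hunit t hts).mul_left_eq_zero, ZMod.natCast_eq_zero_iff] at hzero
    have hle : count t V' ≤ m t - 1 := (count_le_of_le t hV').trans (by simp [hcountV, hts])
    have hpos := count_pos.2 ht
    have := Nat.le_of_dvd hpos hzero
    omega
  simp only [hV'0, Multiset.map_zero, add_zero] at hU0 hUsum
  exact hS U₁ hU₁ hU0 hUsum

end IsZeroSumFree

namespace ZMod

variable {d N : ℕ}

def embedOfDvd (h : d ∣ N) : ZMod d →+ ZMod N :=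
  ZMod.lift d ⟨zmultiplesHom (ZMod N) ((N / d : ℕ) : ZMod N), by
    simp [← Nat.cast_mul, Nat.mul_div_cancel' h]⟩

lemma embedOfDvd_intCast (h : d ∣ N) (k : ℤ) :
    embedOfDvd h k = ((k * (N / d : ℕ) : ℤ) : ZMod N) := by
  rw [embedOfDvd, ZMod.lift_coe]
  simp only [zmultiplesHom_apply, zsmul_eq_mul, Int.cast_mul, Int.cast_natCast]

lemma intCast_nsmul (m : ℕ) (k : ℤ) : m • (k : ZMod N) = ((m * k : ℤ) : ZMod N) := by
  simp [nsmul_eq_mul]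

lemma embedOfDvd_injective (hN : N ≠ 0) (h : d ∣ N) : Function.Injective (embedOfDvd h) := by
  rw [injective_iff_map_eq_zero]
  intro y hy
  obtain ⟨k, rfl⟩ := ZMod.intCast_surjective y
  rw [embedOfDvd_intCast, ZMod.intCast_zmod_eq_zero_iff_dvd] at hy
  rw [ZMod.intCast_zmod_eq_zero_iff_dvd]
  have hNd : ((N / d : ℕ) : ℤ) ≠ 0 := by
    have := Nat.div_pos (Nat.le_of_dvd (Nat.pos_of_ne_zero hN) h)
      (Nat.pos_of_dvd_of_pos h (Nat.pos_of_ne_zero hN))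
    omega
  refine Int.dvd_of_mul_dvd_mul_right hNd ?_
  rwa [← Nat.cast_mul, Nat.mul_div_cancel' h]

lemma exists_embedOfDvd_eq (hN : N ≠ 0) (h : d ∣ N) {x : ZMod N} (hx : d • x = 0) :
    ∃ y, embedOfDvd h y = x := by
  obtain ⟨k, rfl⟩ := ZMod.intCast_surjective x
  have hd : (d : ℤ) ≠ 0 := by
    have := Nat.pos_of_dvd_of_pos h (Nat.pos_of_ne_zero hN)
    omega
  rw [intCast_nsmul, ZMod.intCast_zmod_eq_zero_iff_dvd, ← Nat.mul_div_cancel' h,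
    Nat.cast_mul] at hx
  obtain ⟨j, hj⟩ := Int.dvd_of_mul_dvd_mul_left hd hx
  exact ⟨j, by rw [embedOfDvd_intCast, hj, mul_comm]⟩

lemma castHom_embedOfDvd {k : ℕ} (h : d ∣ N) (hk : k ∣ N / d) (y : ZMod d) :
    castHom (hk.trans (Nat.div_dvd_of_dvd h)) (ZMod k) (embedOfDvd h y) = 0 := by
  obtain ⟨j, rfl⟩ := ZMod.intCast_surjective y
  rw [embedOfDvd_intCast, map_intCast, ZMod.intCast_zmod_eq_zero_iff_dvd]
  exact Dvd.dvd.mul_left (Int.natCast_dvd_natCast.2 hk) j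

lemma nsmul_eq_zero_of_castHom_eq_zero {p : ℕ} (hp : p ∣ d) {s : ZMod d}
    (hs : castHom hp (ZMod p) s = 0) : (d / p) • s = 0 := by
  obtain ⟨k, rfl⟩ := ZMod.intCast_surjective s
  rw [map_intCast, ZMod.intCast_zmod_eq_zero_iff_dvd] at hs
  obtain ⟨j, rfl⟩ := hs
  rw [intCast_nsmul, ZMod.intCast_zmod_eq_zero_iff_dvd, ← mul_assoc, ← Nat.cast_mul,
    Nat.div_mul_cancel hp]
  exact dvd_mul_right _ _

end ZMod

section CyclicPower

variable {ι : Type*} {N : ℕ}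

def embedPi {n : ι → ℕ} (h : ∀ i, n i ∣ N) : (∀ i, ZMod (n i)) →+ (ι → ZMod N) :=
  AddMonoidHom.piMap fun i => ZMod.embedOfDvd (h i)

lemma embedPi_injective (hN : N ≠ 0) {n : ι → ℕ} (h : ∀ i, n i ∣ N) :
    Function.Injective (embedPi h) := fun _ _ hxy =>
  funext fun i => ZMod.embedOfDvd_injective hN (h i) (congrFun hxy i)

lemma exists_embedPi_eq (hN : N ≠ 0) {d : ℕ} (hd : d ∣ N) {x : ι → ZMod N} (hx : d • x = 0) :
    ∃ y, embedPi (fun _ => hd) y = x := by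
  choose y hy using fun i => ZMod.exists_embedOfDvd_eq hN hd (congrFun hx i)
  exact ⟨y, funext hy⟩

def coordCast {k : ℕ} (i : ι) (hk : k ∣ N) : (ι → ZMod N) →+ ZMod k :=
  (ZMod.castHom hk (ZMod k)).toAddMonoidHom.comp (Pi.evalAddMonoidHom _ i)

@[simp]
lemma coordCast_apply {k : ℕ} (i : ι) (hk : k ∣ N) (x : ι → ZMod N) :
    coordCast i hk x = ZMod.castHom hk (ZMod k) (x i) :=
  rfl

variable [Fintype ι]

lemma IsZeroSumFree.exists_le_card_le_minFac_nsmul_sum_eq_zero (hN : N ≠ 0) {d : ℕ}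
    (hd : d ∣ N) {F : Multiset (ι → ZMod N)} (hF : IsZeroSumFree F)
    (hFd : ∀ x ∈ F, addOrderOf x = d)
    (hcard : min (etaConst (ι → ZMod d.minFac)) (davenport (ι → ZMod d)) ≤ card F) :
    ∃ T ≤ F, T ≠ 0 ∧ card T ≤ d.minFac ∧ (d / d.minFac) • T.sum = 0 := by
  have : NeZero d := ⟨by rintro rfl; exact hN (Nat.eq_zero_of_zero_dvd hd)⟩
  have : NeZero d.minFac := ⟨(Nat.minFac_pos d).ne'⟩
  set e := embedPi (ι := ι) fun _ => hd
  obtain ⟨Y, rfl⟩ : ∃ Y : Multiset (ι → ZMod d), Y.map e = F := by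
    have : CanLift (ι → ZMod N) (ι → ZMod d) e (fun x => d • x = 0) :=
      ⟨fun _ hx => exists_embedPi_eq hN hd hx⟩
    exact CanLift.prf F fun x hx => hFd x hx ▸ addOrderOf_nsmul_eq_zero x
  have hη : etaConst (ι → ZMod d.minFac) ≤ card Y := by
    have := hF.of_map.card_lt_davenport
    rw [card_map] at hcard
    omega
  obtain ⟨T, hTY, hT0, hTcard, hT⟩ := exists_le_card_le_exponent_map_sum_eq_zero
    ((ZMod.castHom (Nat.minFac_dvd d) (ZMod d.minFac)).toAddMonoidHom.compLeft ι) hη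
  have hexp : AddMonoid.exponent (ι → ZMod d.minFac) ≤ d.minFac :=
    Nat.le_of_dvd (Nat.minFac_pos d) (AddMonoid.exponent_dvd_of_forall_nsmul_eq_zero fun g =>
      funext fun i => by simp)
  have hTsum : (d / d.minFac) • T.sum = 0 :=
    funext fun i => ZMod.nsmul_eq_zero_of_castHom_eq_zero (Nat.minFac_dvd d) (congrFun hT i)
  refine ⟨T.map e, map_le_map hTY, by simpa using hT0, by simpa using hTcard.trans hexp, ?_⟩
  rw [← map_multiset_sum, ← e.map_nsmul, hTsum, e.map_zero]

theorem crossNumber_le_of_isZeroSumFree (hN : N ≠ 0) {S : Multiset (ι → ZMod N)}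
    (hS : IsZeroSumFree S) :
    crossNumber S ≤ ∑ d ∈ N.divisors,
      ((min (etaConst (ι → ZMod d.minFac)) (davenport (ι → ZMod d)) : ℝ) - 1) / d := by
  induction hk : card S using Nat.strong_induction_on generalizing S with
  | _ k ih =>
  by_cases hsmall : ∀ d ∈ N.divisors, card (S.filter fun x => addOrderOf x = d) <
      min (etaConst (ι → ZMod d.minFac)) (davenport (ι → ZMod d))
  · refine crossNumber_le_of_card_filter_le S _ (fun x _ => Nat.mem_divisors.2
      ⟨addOrderOf_dvd_of_nsmul_eq_zero (funext fun i => by simp), hN⟩) _ fun d hd => ?_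
    have : (card (S.filter fun x => addOrderOf x = d) : ℝ) + 1 ≤
        (min (etaConst (ι → ZMod d.minFac)) (davenport (ι → ZMod d)) : ℕ) := by
      exact_mod_cast hsmall d hd
    rw [← Nat.cast_min]
    linarith
  push Not at hsmall
  obtain ⟨d, hd, hcard⟩ := hsmall
  obtain ⟨T, hTF, hT0, hTcard, hT⟩ :=
    (hS.mono (filter_le _ S)).exists_le_card_le_minFac_nsmul_sum_eq_zero hN
      (Nat.dvd_of_mem_divisors hd) (fun x hx => (mem_filter.1 hx).2) hcard
  obtain ⟨S', hS', hlt, hle⟩ := hS.exists_card_lt_crossNumber_le (hTF.trans (filter_le _ S)) hT0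
    (Nat.pos_of_mem_divisors hd) (fun x hx => (mem_filter.1 (mem_of_le hTF hx)).2) hTcard hT
  exact hle.trans (ih _ (hk ▸ hlt) hS' rfl)

end CyclicPower

lemma addOrderOf_piSingle {ι : Type*} [DecidableEq ι] {M : Type*} [AddMonoid M] (i : ι) (x : M) :
    addOrderOf (Pi.single i x : ι → M) = addOrderOf x :=
  addOrderOf_injective (AddMonoidHom.single (fun _ => M) i)
    (Pi.single_injective (M := fun _ => M) i) x

lemma sum_primeFactors_sub_one_div_le (c : ℕ) :
    ∑ p ∈ c.primeFactors, ((p ^ c.factorization p : ℝ) - 1) / p ^ c.factorization p ≤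
      (c - 1 : ℕ) := by
  have hsub : c.primeFactors ⊆ Finset.Icc 2 c := fun p hp =>
    Finset.mem_Icc.2 ⟨(Nat.prime_of_mem_primeFactors hp).two_le, Nat.le_of_mem_primeFactors hp⟩
  calc _ ≤ ∑ p ∈ c.primeFactors, (1 : ℝ) := Finset.sum_le_sum fun p hp =>
        div_le_one_of_le₀ (by linarith) (by positivity)
    _ ≤ (c - 1 : ℕ) := by
        have := Finset.card_le_card hsub
        rw [Nat.card_Icc] at this
        rw [Finset.sum_const, nsmul_one]
        exact_mod_cast this.trans (by omega)

section Padding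

variable {ι : Type*} [Fintype ι] [DecidableEq ι] (N : ℕ) (c : ι → ℕ)

def basisPadding : Multiset (ι → ZMod N) :=
  ∑ i, replicate (c i - 1) (Pi.single i 1)

def primaryPadding : Multiset (ι → ZMod N) :=
  ∑ t ∈ Finset.univ.sigma fun i => (c i).primeFactors,
    replicate (ordProj[t.2] (c t.1) - 1) (Pi.single t.1 ((N / ordProj[t.2] (c t.1) : ℕ) : ZMod N))

variable {N}

lemma IsZeroSumFree.map_embedPi_add_basisPadding {n : ι → ℕ} (hN : N ≠ 0)
    (hn : ∀ i, n i ∣ N) {S : Multiset (∀ i, ZMod (n i))} (hS : IsZeroSumFree S) :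
    IsZeroSumFree (S.map (embedPi hn) + basisPadding N fun i => N / n i) := by
  refine (hS.map (embedPi_injective hN hn)).add_sum_replicate Finset.univ
    (fun i => Pi.single i 1) (fun i => coordCast i (Nat.div_dvd_of_dvd (hn i))) ?_ ?_
    (fun i _ => by simp only [coordCast_apply, Pi.single_eq_same, map_one, isUnit_one])
  · intro i _ x hx
    obtain ⟨y, -, rfl⟩ := mem_map.1 hx
    exact ZMod.castHom_embedOfDvd (hn i) dvd_rfl (y i)
  · intro i _ j _ hji
    simp [Ne.symm hji]

lemma IsZeroSumFree.map_embedPi_add_primaryPadding {n : ι → ℕ} (hN : N ≠ 0)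
    (hn : ∀ i, n i ∣ N) (hcop : ∀ i, Nat.Coprime (n i) (N / n i))
    {S : Multiset (∀ i, ZMod (n i))} (hS : IsZeroSumFree S) :
    IsZeroSumFree (S.map (embedPi hn) + primaryPadding N fun i => N / n i) := by
  refine (hS.map (embedPi_injective hN hn)).add_sum_replicate _ _
    (fun t => coordCast t.1 ((Nat.ordProj_dvd _ t.2).trans (Nat.div_dvd_of_dvd (hn t.1))))
    ?_ ?_ ?_
  · rintro ⟨i, p⟩ - x hx
    obtain ⟨y, -, rfl⟩ := mem_map.1 hx
    exact ZMod.castHom_embedOfDvd (hn i) (Nat.ordProj_dvd _ _) (y i)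
  · rintro ⟨i, p⟩ hip ⟨j, q⟩ hjq hne
    simp only [Finset.mem_sigma, Finset.mem_univ, true_and] at hip hjq
    by_cases hji : j = i
    · subst hji
      have hqp : q ≠ p := fun h => hne (h ▸ rfl)
      have hcop_pq := (Nat.coprime_primes (Nat.prime_of_mem_primeFactors hjq)
        (Nat.prime_of_mem_primeFactors hip)).2 hqp
      simp only [coordCast_apply, Pi.single_eq_same, map_natCast, ZMod.natCast_eq_zero_iff]
      exact Nat.dvd_div_of_mul_dvd ((Nat.Coprime.mul_dvd_of_dvd_of_dvd (hcop_pq.pow _ _)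
        (Nat.ordProj_dvd _ _) (Nat.ordProj_dvd _ _)).trans (Nat.div_dvd_of_dvd (hn j)))
    · simp [Ne.symm hji]
  · rintro ⟨i, p⟩ hip
    simp only [Finset.mem_sigma, Finset.mem_univ, true_and] at hip
    have hsplit : N / ordProj[p] (N / n i) = n i * (N / n i / ordProj[p] (N / n i)) := by
      rw [← Nat.mul_div_assoc _ (Nat.ordProj_dvd _ _), Nat.mul_div_cancel' (hn i)]
    simp only [coordCast_apply, Pi.single_eq_same, map_natCast, ZMod.isUnit_iff_coprime, hsplit]
    refine Nat.Coprime.pow_right _ (Nat.Coprime.mul_left ?_ ?_)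
    · exact (hcop i).coprime_dvd_right (Nat.dvd_of_mem_primeFactors hip)
    · exact (Nat.coprime_ordCompl (Nat.prime_of_mem_primeFactors hip)
        (Nat.mem_primeFactors.1 hip).2.2).symm

end Padding

lemma kStarTuple_div_le_crossNumber_basisPadding {r : ℕ} (N : ℕ) (c : Fin r → ℕ) :
    kStarTuple c / N ≤ crossNumber (basisPadding N c) := by
  rw [kStarTuple, basisPadding, crossNumber_sum, Finset.sum_div]
  refine Finset.sum_le_sum fun i _ => ?_
  rw [crossNumber_replicate, addOrderOf_piSingle, ZMod.addOrderOf_one]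
  gcongr
  exact sum_primeFactors_sub_one_div_le (c i)

lemma kStarTuple_eq_crossNumber_primaryPadding {r N : ℕ} (hN : N ≠ 0) (c : Fin r → ℕ)
    (hc : ∀ i, c i ∣ N) : kStarTuple c = crossNumber (primaryPadding N c) := by
  rw [kStarTuple, primaryPadding, crossNumber_sum, Finset.sum_sigma]
  refine Finset.sum_congr rfl fun i _ => Finset.sum_congr rfl fun p hp => ?_
  have hKN : ordProj[p] (c i) ∣ N := (Nat.ordProj_dvd _ _).trans (hc i)
  rw [crossNumber_replicate, addOrderOf_piSingle, ZMod.addOrderOf_coe _ hN,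
    Nat.gcd_eq_right (Nat.div_dvd_of_dvd hKN), Nat.div_div_self hKN hN,
    Nat.cast_sub (Nat.one_le_pow _ _ (Nat.pos_of_mem_primeFactors hp))]
  push_cast
  rfl

lemma littleCrossNumber_le_sub_crossNumber {G A : Type*} [AddCommGroup G] [AddCommGroup A]
    {e : G →+ A} (he : Function.Injective e) {W : Multiset A}
    (hW : ∀ S : Multiset G, IsZeroSumFree S → IsZeroSumFree (S.map e + W)) {B : ℝ}
    (hB : ∀ S : Multiset A, IsZeroSumFree S → crossNumber S ≤ B) :
    littleCrossNumber G ≤ B - crossNumber W := by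
  refine csSup_le ⟨0, 0, IsZeroSumFree.zero, crossNumber_zero⟩ ?_
  rintro _ ⟨S, hS, rfl⟩
  have := hB _ (hW S hS)
  rw [crossNumber_add, crossNumber_map_of_injective he] at this
  linarith

theorem stmt4 (r : ℕ) (hr : 0 < r) (n : Fin r → ℕ)
    (hn : ∀ i, 1 < n i) (hdvd : ∀ i j : Fin r, i ≤ j → n i ∣ n j)
    (N : ℕ) (hN : N = n ⟨r - 1, by omega⟩) :
    littleCrossNumber (∀ i : Fin r, ZMod (n i)) ≤
      (∑ d ∈ N.divisors,
        ((min (etaConst (Fin r → ZMod d.minFac)) (davenport (Fin r → ZMod d)) : ℝ) - 1) / d)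
      - kStarTuple (fun i : Fin r => N / n i) / N ∧
    ((∀ i, Nat.gcd (n i) (N / n i) = 1) →
      littleCrossNumber (∀ i : Fin r, ZMod (n i)) ≤
        (∑ d ∈ N.divisors,
          ((min (etaConst (Fin r → ZMod d.minFac)) (davenport (Fin r → ZMod d)) : ℝ) - 1) / d)
        - kStarTuple (fun i : Fin r => N / n i)) := by
  have hN0 : N ≠ 0 := by
    have := hn ⟨r - 1, by omega⟩
    omega
  have hnN (i : Fin r) : n i ∣ N := hN ▸ hdvd i _ (Fin.le_def.2 (by simp; omega))
  have he := embedPi_injective hN0 hnN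
  have hbound (S : Multiset (Fin r → ZMod N)) (hS : IsZeroSumFree S) :=
    crossNumber_le_of_isZeroSumFree hN0 hS
  refine ⟨?_, fun hcop => ?_⟩
  · refine (littleCrossNumber_le_sub_crossNumber he
      (fun S hS => hS.map_embedPi_add_basisPadding hN0 hnN) hbound).trans ?_
    gcongr
    exact kStarTuple_div_le_crossNumber_basisPadding N _
  · refine (littleCrossNumber_le_sub_crossNumber he
      (fun S hS => hS.map_embedPi_add_primaryPadding hN0 hnN hcop) hbound).trans_eq ?_
    rw [kStarTuple_eq_crossNumber_primaryPadding hN0 _ fun i => Nat.div_dvd_of_dvd (hnN i)]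
end

section
/- For every integer l ≥ 1, l ≤ α_l ≤ (α_9/9)·l, where α_9/9 = 166822111/109486080. -/
open scoped BigOperators

/-- `p_l`, the `l`-th prime number (`p_1 = 2`). -/
noncomputable def nthPrime (l : ℕ) : ℕ := Nat.nth Nat.Prime (l - 1)

/-- `α_1 = 1` and `α_l = 1 + (p_l/(p_l − 1))·α_{l−1}` for `l ≥ 2`. -/
noncomputable def alphaSeq : ℕ → ℝ
  | 0 => 0
  | 1 => 1
  | l + 2 => 1 + ((nthPrime (l + 2) : ℝ) / ((nthPrime (l + 2) : ℝ) - 1)) * alphaSeq (l + 1)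

/-- `β_l = Σ_{i=1}^l (p_i − 1)/p_i`. -/
noncomputable def betaSeq (l : ℕ) : ℝ :=
  ∑ i ∈ Finset.range l, ((nthPrime (i + 1) : ℝ) - 1) / (nthPrime (i + 1))

/-- `γ_l = 3α_l − β_l`. -/
noncomputable def gammaSeq (l : ℕ) : ℝ := 3 * alphaSeq l - betaSeq l


/-!
Since `p/(p-1) ≥ 1`, each step of the recursion adds at least `1`, which gives `l ≤ α_l`.
For the upper bound write `c = α_9/9`. Three consecutive primes `≥ 5` cannot be `q, q+2, q+4`
(one of them would be divisible by `3`), so `p_{k+2} ≥ p_k + 6`, whence `p_{l+1} ≥ 3l + 1` for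
`l ≥ 9`. Then `p/(p-1) · cl ≤ cl + c/3 ≤ c(l+1) - 1` because `c ≥ 3/2`, so `α_l ≤ cl` propagates
from `l = 9`, where it is an equality; for `l ≤ 9` it is checked on the computed values.
-/

namespace Nat

lemma nth_prime_eq_of_count_eq {n q : ℕ} (hq : q.Prime) (h : count Nat.Prime q = n) :
    nth Nat.Prime n = q :=
  h ▸ nth_count hq

lemma nth_prime_five_eq_thirteen : nth Nat.Prime 5 = 13 :=
  nth_prime_eq_of_count_eq (by norm_num) (by decide)

lemma nth_prime_six_eq_seventeen : nth Nat.Prime 6 = 17 :=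
  nth_prime_eq_of_count_eq (by norm_num) (by decide)

lemma nth_prime_seven_eq_nineteen : nth Nat.Prime 7 = 19 :=
  nth_prime_eq_of_count_eq (by norm_num) (by decide)

lemma nth_prime_eight_eq_twenty_three : nth Nat.Prime 8 = 23 :=
  nth_prime_eq_of_count_eq (by norm_num) (by decide)

lemma nth_prime_nine_eq_twenty_nine : nth Nat.Prime 9 = 29 :=
  nth_prime_eq_of_count_eq (by norm_num) (by decide)

lemma nth_prime_ten_eq_thirty_one : nth Nat.Prime 10 = 31 :=
  nth_prime_eq_of_count_eq (by norm_num) (by decide)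

lemma Prime.mod_two_eq_one_and_mod_three_ne_zero {p : ℕ} (hp : p.Prime) (h5 : 5 ≤ p) :
    p % 2 = 1 ∧ p % 3 ≠ 0 := by
  refine ⟨hp.mod_two_eq_one_iff_ne_two.mpr (by omega), fun h3 => ?_⟩
  have := hp.eq_one_or_self_of_dvd 3 (dvd_of_mod_eq_zero h3)
  omega

lemma Prime.add_six_le_of_lt_of_lt {p q r : ℕ} (hp : p.Prime) (hq : q.Prime) (hr : r.Prime)
    (h5 : 5 ≤ p) (hpq : p < q) (hqr : q < r) : p + 6 ≤ r := by
  obtain ⟨hp2, hp3⟩ := hp.mod_two_eq_one_and_mod_three_ne_zero h5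
  obtain ⟨hq2, hq3⟩ := hq.mod_two_eq_one_and_mod_three_ne_zero (by omega)
  obtain ⟨hr2, hr3⟩ := hr.mod_two_eq_one_and_mod_three_ne_zero (by omega)
  by_contra
  obtain ⟨rfl, rfl⟩ : q = p + 2 ∧ r = p + 4 := by omega
  obtain h | h : p % 3 = 1 ∨ p % 3 = 2 := by omega
  · exact hr3 (by omega)
  · exact hq3 (by omega)

lemma nth_prime_add_six_le {k : ℕ} (hk : 2 ≤ k) :
    nth Nat.Prime k + 6 ≤ nth Nat.Prime (k + 2) := by
  have hmono := nth_strictMono infinite_setOfPred_prime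
  have h5 : 5 ≤ nth Nat.Prime k :=
    nth_prime_two_eq_five ▸ hmono.monotone hk
  exact (prime_nth_prime k).add_six_le_of_lt_of_lt (prime_nth_prime (k + 1))
    (prime_nth_prime (k + 2)) h5 (hmono (by omega)) (hmono (by omega))

lemma three_mul_add_one_le_nth_prime {k : ℕ} (hk : 9 ≤ k) : 3 * k + 1 ≤ nth Nat.Prime k := by
  induction k using Nat.strong_induction_on with
  | _ k ih =>
  obtain rfl | rfl | h11 : k = 9 ∨ k = 10 ∨ 11 ≤ k := by omega
  · simp [nth_prime_nine_eq_twenty_nine]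
  · simp [nth_prime_ten_eq_thirty_one]
  · have hprev := ih (k - 2) (by omega) (by omega)
    have hgap := nth_prime_add_six_le (k := k - 2) (by omega)
    rw [Nat.sub_add_cancel (by omega : 2 ≤ k)] at hgap
    omega

end Nat

lemma alphaSeq_succ (l : ℕ) :
    alphaSeq (l + 1) = 1 + (nthPrime (l + 1) : ℝ) / (nthPrime (l + 1) - 1) * alphaSeq l := by
  cases l <;> simp [alphaSeq]

lemma le_alphaSeq (l : ℕ) : (l : ℝ) ≤ alphaSeq l := by
  induction l with
  | zero => simp [alphaSeq]
  | succ l ih =>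
    have hp : (2 : ℝ) ≤ nthPrime (l + 1) := by exact_mod_cast (Nat.prime_nth_prime _).two_le
    have hratio : 1 ≤ (nthPrime (l + 1) : ℝ) / (nthPrime (l + 1) - 1) :=
      (one_le_div (by linarith)).mpr (by linarith)
    have := le_mul_of_one_le_left (ih.trans' l.cast_nonneg) hratio
    rw [alphaSeq_succ]
    push_cast
    linarith

lemma one_add_div_mul_le {c n P a : ℝ} (hc : 3 / 2 ≤ c) (hn : 0 < n) (hP : 3 * n + 1 ≤ P)
    (ha : a ≤ c * n) : 1 + P / (P - 1) * a ≤ c * (n + 1) := by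
  have hP1 : 3 * n ≤ P - 1 := by linarith
  have hP1pos : 0 < P - 1 := by linarith
  calc 1 + P / (P - 1) * a
      ≤ 1 + P / (P - 1) * (c * n) := by gcongr; exact div_nonneg (by linarith) hP1pos.le
    _ = 1 + c * n + c * n / (P - 1) := by field_simp; ring
    _ ≤ 1 + c * n + c * n / (3 * n) := by gcongr
    _ = 1 + c * n + c / 3 := by field_simp
    _ ≤ c * (n + 1) := by linarith

lemma alphaSeq_le_of_le_nine {l : ℕ} (hl : l ≤ 9) :
    alphaSeq l ≤ (166822111 / 109486080 : ℝ) * l := by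
  interval_cases l <;>
    norm_num [alphaSeq, alphaSeq_succ, nthPrime, Nat.nth_prime_zero_eq_two,
      Nat.nth_prime_one_eq_three, Nat.nth_prime_two_eq_five, Nat.nth_prime_three_eq_seven,
      Nat.nth_prime_four_eq_eleven, Nat.nth_prime_five_eq_thirteen,
      Nat.nth_prime_six_eq_seventeen, Nat.nth_prime_seven_eq_nineteen,
      Nat.nth_prime_eight_eq_twenty_three]

lemma alphaSeq_le (l : ℕ) : alphaSeq l ≤ (166822111 / 109486080 : ℝ) * l := by
  rcases le_total l 9 with hl | hl
  · exact alphaSeq_le_of_le_nine hl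
  induction l, hl using Nat.le_induction with
  | base => exact alphaSeq_le_of_le_nine le_rfl
  | succ l hl ih =>
    have hp : (3 * l + 1 : ℝ) ≤ nthPrime (l + 1) := by
      exact_mod_cast Nat.three_mul_add_one_le_nth_prime hl
    rw [alphaSeq_succ]
    push_cast
    exact one_add_div_mul_le (by norm_num) (by positivity) hp ih

theorem stmt10_general (l : ℕ) :
    (l : ℝ) ≤ alphaSeq l ∧ alphaSeq l ≤ (166822111 / 109486080 : ℝ) * l :=
  ⟨le_alphaSeq l, alphaSeq_le l⟩

theorem stmt10 (l : ℕ) (hl : 1 ≤ l) :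
    (l : ℝ) ≤ alphaSeq l ∧ alphaSeq l ≤ (166822111 / 109486080 : ℝ) * l :=
  stmt10_general l
end
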